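/- Let ψ : [0,1) → [0,∞) be integrable with lim_{x↑1} ψ(x) = ψ₁ ∈ (0,∞), and let λ > 0. Then for fixed positive reals t₁, t₂, the quantity (λ/(n log n)) · ∫_0^1 ∑_{k=1}^{⌊n t₁⌋} ∑_{ℓ=1}^{⌊n t₂⌋} a^{|k-ℓ|} ψ(a) da converges to 2 λ ψ₁ min(t₁, t₂) as n → ∞. -/

import Mathlib

/-!
Write `T(a) = ∑_{k ≤ ⌊n t₁⌋, ℓ ≤ ⌊n t₂⌋} a^{|k-ℓ|}`. The kernels `T / (n log n)` are nonnegative on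
`[0, 1]` and tend to `0` uniformly on every `[0, c]` with `c < 1`, since each row of `T` is a sum
of two geometric series. Their mass `∑ 1/(|k-ℓ|+1) / (n log n)` tends to `2 min(t₁, t₂)`: each row
of that sum is a sum of two harmonic partial sums, which pins it between `2m log(m+1) - 3m` and
`2m (1 + log(M+1))`, where `m` and `M` are the smaller and the larger of `⌊n t₁⌋`, `⌊n t₂⌋`.
Kernels of this kind integrate `ψ` to `ψ(1⁻)` times the limiting mass: away from `1` they kill the
integrable function `ψ - ψ(1⁻)`, and near `1` that function is small.
-/

open Finset Filter MeasureTheory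
open Topology

noncomputable def toeplitzSum (f : ℕ → ℝ) (K L : ℕ) : ℝ :=
  ∑ k ∈ Icc 1 K, ∑ ℓ ∈ Icc 1 L, f ((k : ℤ) - ℓ).natAbs

theorem toeplitzSum_comm (f : ℕ → ℝ) (K L : ℕ) : toeplitzSum f K L = toeplitzSum f L K := by
  rw [toeplitzSum, sum_comm]
  refine sum_congr rfl fun ℓ _ => sum_congr rfl fun k _ => ?_
  rw [← Int.natAbs_neg, neg_sub]

theorem sum_Icc_natAbs_sub (f : ℕ → ℝ) {k L : ℕ} (hkL : k ≤ L) :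
    ∑ ℓ ∈ Icc 1 L, f ((k : ℤ) - ℓ).natAbs =
      ∑ j ∈ range k, f j + ∑ j ∈ Icc 1 (L - k), f j := by
  induction L, hkL using Nat.le_induction with
  | base =>
    rw [Nat.sub_self, Icc_eq_empty_of_lt one_pos, sum_empty, add_zero]
    refine sum_nbij' (k - ·) (k - ·) ?_ ?_ ?_ ?_ ?_ <;> intro x hx <;>
      simp only [mem_Icc, mem_range] at hx ⊢ <;> try omega
    congr 1; omega
  | succ L hkL ih =>
    rw [sum_Icc_succ_top (by omega), ih, Nat.succ_sub hkL, sum_Icc_succ_top (by omega),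
      add_assoc]
    congr 3
    omega

theorem toeplitzSum_mono_right {f : ℕ → ℝ} (hf : ∀ j, 0 ≤ f j) (K : ℕ) {L L' : ℕ}
    (hL : L ≤ L') : toeplitzSum f K L ≤ toeplitzSum f K L' :=
  sum_le_sum fun _ _ => sum_le_sum_of_subset_of_nonneg (Icc_subset_Icc_right hL)
    fun _ _ _ => hf _

theorem toeplitzSum_le_two_mul_sum_range {f : ℕ → ℝ} (hf : ∀ j, 0 ≤ f j) {K L : ℕ}
    (hKL : K ≤ L) : toeplitzSum f K L ≤ 2 * K * ∑ j ∈ range (L + 1), f j := by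
  have hrow : ∀ k ∈ Icc 1 K,
      ∑ ℓ ∈ Icc 1 L, f ((k : ℤ) - ℓ).natAbs ≤ 2 * ∑ j ∈ range (L + 1), f j := by
    intro k hk
    rw [mem_Icc] at hk
    rw [sum_Icc_natAbs_sub f (hk.2.trans hKL), two_mul]
    refine add_le_add (sum_le_sum_of_subset_of_nonneg ?_ fun _ _ _ => hf _)
      (sum_le_sum_of_subset_of_nonneg ?_ fun _ _ _ => hf _) <;>
      intro j hj <;> simp only [mem_Icc, mem_range] at hj ⊢ <;> omega
  calc toeplitzSum f K L ≤ ∑ _k ∈ Icc 1 K, 2 * ∑ j ∈ range (L + 1), f j := sum_le_sum hrow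
    _ = 2 * K * ∑ j ∈ range (L + 1), f j := by
      rw [sum_const, Nat.card_Icc, nsmul_eq_mul, Nat.add_sub_cancel, mul_assoc, mul_left_comm]

theorem sum_Icc_reflect (g : ℕ → ℝ) (m : ℕ) :
    ∑ k ∈ Icc 1 m, g (m + 1 - k) = ∑ k ∈ Icc 1 m, g k := by
  refine sum_nbij' (m + 1 - ·) (m + 1 - ·) ?_ ?_ ?_ ?_ fun _ _ => rfl <;> intro x hx <;>
    simp only [mem_Icc] at hx ⊢ <;> omega

theorem toeplitzSum_self (f : ℕ → ℝ) (m : ℕ) :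
    toeplitzSum f m m = 2 * ∑ k ∈ Icc 1 m, ∑ j ∈ range k, f j - m * f 0 := by
  have hrow : ∀ k ∈ Icc 1 m, ∑ ℓ ∈ Icc 1 m, f ((k : ℤ) - ℓ).natAbs
      = ∑ j ∈ range k, f j + ∑ j ∈ range (m + 1 - k), f j - f 0 := by
    intro k hk
    rw [mem_Icc] at hk
    rw [sum_Icc_natAbs_sub f hk.2, Nat.sub_add_comm hk.2,
      sum_range_eq_add_Ico f (Nat.succ_pos (m - k)), Nat.succ_eq_add_one,
      Ico_add_one_right_eq_Icc]
    ring
  -- the part of row `k` right of the diagonal is the part of row `m + 1 - k` left of it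
  rw [toeplitzSum, sum_congr rfl hrow, sum_sub_distrib, sum_add_distrib,
    sum_Icc_reflect (fun k => ∑ j ∈ range k, f j), sum_const, Nat.card_Icc, nsmul_eq_mul]
  push_cast
  ring

theorem sum_Icc_harmonic (m : ℕ) :
    ∑ k ∈ Icc 1 m, harmonic k = (m + 1) * harmonic m - m := by
  induction m with
  | zero => simp
  | succ m ih =>
    rw [sum_Icc_succ_top (by omega), ih, harmonic_succ]
    push_cast
    field_simp
    ring

theorem sum_range_inv_succ (k : ℕ) : ∑ j ∈ range k, ((j : ℝ) + 1)⁻¹ = harmonic k := by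
  simp [harmonic]

theorem toeplitzSum_inv_succ_self (m : ℕ) :
    toeplitzSum (fun d => ((d : ℝ) + 1)⁻¹) m m = 2 * (m + 1) * harmonic m - 3 * m := by
  rw [toeplitzSum_self]
  simp only [sum_range_inv_succ]
  rw [← Rat.cast_sum, sum_Icc_harmonic]
  push_cast
  ring

theorem le_toeplitzSum_inv_succ {K L : ℕ} (hKL : K ≤ L) :
    2 * K * Real.log (K + 1) - 3 * K ≤ toeplitzSum (fun d => ((d : ℝ) + 1)⁻¹) K L := by
  have hlog : Real.log (K + 1) ≤ harmonic K := by exact_mod_cast log_add_one_le_harmonic K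
  have hlog₀ : 0 ≤ Real.log (K + 1) := Real.log_nonneg (by linarith [K.cast_nonneg (α := ℝ)])
  calc 2 * K * Real.log (K + 1) - 3 * K ≤ 2 * (K + 1) * harmonic K - 3 * K := by nlinarith
    _ = toeplitzSum (fun d => ((d : ℝ) + 1)⁻¹) K K := (toeplitzSum_inv_succ_self K).symm
    _ ≤ _ := toeplitzSum_mono_right (fun _ => by positivity) K hKL

theorem toeplitzSum_inv_succ_le {K L : ℕ} (hKL : K ≤ L) :
    toeplitzSum (fun d => ((d : ℝ) + 1)⁻¹) K L ≤ 2 * K * (1 + Real.log (L + 1)) := by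
  refine (toeplitzSum_le_two_mul_sum_range (fun _ => by positivity) hKL).trans ?_
  rw [sum_range_inv_succ]
  gcongr
  exact_mod_cast harmonic_le_one_add_log (L + 1)

theorem toeplitzSum_pow_le {a : ℝ} (ha₀ : 0 ≤ a) (ha₁ : a < 1) (K L : ℕ) :
    toeplitzSum (a ^ ·) K L ≤ 2 * K / (1 - a) := by
  have hsub : 0 < 1 - a := by linarith
  have hle : ∀ {K L : ℕ}, K ≤ L → toeplitzSum (a ^ ·) K L ≤ 2 * K / (1 - a) := fun hKL => by
    calc _ ≤ 2 * _ * ∑ j ∈ range (_ + 1), a ^ j :=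
          toeplitzSum_le_two_mul_sum_range (fun _ => by positivity) hKL
      _ ≤ 2 * _ * (1 / (1 - a)) := by
          gcongr
          simpa only [pow_zero, ← range_eq_Ico] using
            geom_sum_Ico_le_of_lt_one (m := 0) ha₀ ha₁
      _ = _ := by ring
  rcases le_total K L with hKL | hLK
  · exact hle hKL
  · rw [toeplitzSum_comm]
    exact (hle hLK).trans (by gcongr)

theorem toeplitzSum_pow_nonneg {a : ℝ} (ha : 0 ≤ a) (K L : ℕ) :
    0 ≤ toeplitzSum (a ^ ·) K L :=
  sum_nonneg fun _ _ => sum_nonneg fun _ _ => pow_nonneg ha _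

theorem continuous_toeplitzSum_pow (K L : ℕ) :
    Continuous fun a : ℝ => toeplitzSum (a ^ ·) K L := by
  unfold toeplitzSum; fun_prop

theorem integral_toeplitzSum_pow (K L : ℕ) :
    ∫ a in Set.Icc (0 : ℝ) 1, toeplitzSum (a ^ ·) K L =
      toeplitzSum (fun d => ((d : ℝ) + 1)⁻¹) K L := by
  unfold toeplitzSum
  rw [integral_finsetSum _ fun k _ =>
    (continuous_finsetSum _ fun ℓ _ => continuous_pow _).integrableOn_Icc]
  refine sum_congr rfl fun k _ => ?_
  rw [integral_finsetSum _ fun ℓ _ => (continuous_pow _).integrableOn_Icc]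
  refine sum_congr rfl fun ℓ _ => ?_
  rw [integral_Icc_eq_integral_Ioc, ← intervalIntegral.integral_of_le zero_le_one, integral_pow]
  norm_num

theorem tendsto_natFloor_mul_div {t : ℝ} (ht : 0 ≤ t) :
    Tendsto (fun n : ℕ => (⌊(n : ℝ) * t⌋₊ : ℝ) / n) atTop (𝓝 t) := by
  refine ((tendsto_nat_floor_mul_div_atTop ht).comp tendsto_natCast_atTop_atTop).congr
    fun n => ?_
  rw [Function.comp_apply, mul_comm]

theorem tendsto_natFloor_mul_add_one_div {t : ℝ} (ht : 0 ≤ t) :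
    Tendsto (fun n : ℕ => ((⌊(n : ℝ) * t⌋₊ : ℝ) + 1) / n) atTop (𝓝 t) := by
  simpa only [add_div, add_zero] using
    (tendsto_natFloor_mul_div ht).add tendsto_one_div_atTop_nhds_zero_nat

theorem tendsto_inv_log_natCast : Tendsto (fun n : ℕ => (Real.log n)⁻¹) atTop (𝓝 0) :=
  (Real.tendsto_log_atTop.comp tendsto_natCast_atTop_atTop).inv_tendsto_atTop

theorem tendsto_log_div_log_natCast {u : ℕ → ℝ} {c : ℝ} (hc : 0 < c)
    (hu : Tendsto (fun n => u n / n) atTop (𝓝 c)) :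
    Tendsto (fun n : ℕ => Real.log (u n) / Real.log n) atTop (𝓝 1) := by
  have h := (((Real.continuousAt_log hc.ne').tendsto.comp hu).mul
    tendsto_inv_log_natCast).add_const 1
  rw [mul_zero, zero_add] at h
  refine h.congr' ?_
  filter_upwards [hu.eventually_ne hc.ne', eventually_gt_atTop 1] with n hun hn
  have hlog : Real.log n ≠ 0 := (Real.log_pos (by exact_mod_cast hn)).ne'
  rw [Function.comp_apply, Real.log_div (div_ne_zero_iff.mp hun).1 (by positivity)]
  field_simp
  ring

theorem tendsto_toeplitzSum_inv_succ_div {t₁ t₂ : ℝ} (ht₁ : 0 < t₁) (ht₂ : 0 < t₂) :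
    Tendsto (fun n : ℕ => toeplitzSum (fun d => ((d : ℝ) + 1)⁻¹) ⌊(n : ℝ) * t₁⌋₊
      ⌊(n : ℝ) * t₂⌋₊ / (n * Real.log n)) atTop (𝓝 (2 * min t₁ t₂)) := by
  wlog h : t₁ ≤ t₂ generalizing t₁ t₂
  · rw [min_comm]
    convert this ht₂ ht₁ (le_of_not_ge h) using 3 with n
    exact toeplitzSum_comm _ _ _
  rw [min_eq_left h]
  have hlogK := tendsto_log_div_log_natCast ht₁ (tendsto_natFloor_mul_add_one_div ht₁.le)
  have hlogL := tendsto_log_div_log_natCast ht₂ (tendsto_natFloor_mul_add_one_div ht₂.le)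
  have hlow := (tendsto_natFloor_mul_div ht₁.le).mul
    ((hlogK.const_mul 2).sub (tendsto_inv_log_natCast.const_mul 3))
  have hup := (tendsto_natFloor_mul_div ht₁.le).mul
    ((tendsto_inv_log_natCast.add hlogL).const_mul 2)
  refine tendsto_of_tendsto_of_tendsto_of_le_of_le' (by convert hlow using 2; ring)
    (by convert hup using 2; ring) ?_ ?_ <;> filter_upwards [eventually_gt_atTop 1] with n hn
  all_goals
    have hlog : 0 < Real.log n := Real.log_pos (by exact_mod_cast hn)
    have hKL : ⌊(n : ℝ) * t₁⌋₊ ≤ ⌊(n : ℝ) * t₂⌋₊ := Nat.floor_le_floor (by gcongr)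
  · rw [le_div_iff₀ (by positivity)]
    refine le_of_eq_of_le ?_ (le_toeplitzSum_inv_succ hKL)
    field_simp
  · rw [div_le_iff₀ (by positivity)]
    refine (toeplitzSum_inv_succ_le hKL).trans_eq ?_
    field_simp

section Concentration

open Set

theorem abs_integral_mul_sub_le {F ψ : ℝ → ℝ} {ψ₁ c ε B : ℝ} (hF : ContinuousOn F (Icc 0 1))
    (hF₀ : ∀ a ∈ Icc (0 : ℝ) 1, 0 ≤ F a) (hψ : IntegrableOn ψ (Ico 0 1)) (hε : 0 ≤ ε)
    (hB : 0 ≤ B) (hFB : ∀ a ∈ Icc 0 c, F a ≤ B) (hψε : ∀ a ∈ Ioo c 1, |ψ a - ψ₁| ≤ ε) :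
    |∫ a in Icc (0 : ℝ) 1, F a * (ψ a - ψ₁)|
      ≤ B * (∫ a in Ico (0 : ℝ) 1, |ψ a - ψ₁|) + ε * ∫ a in Icc (0 : ℝ) 1, F a := by
  rw [integral_Icc_eq_integral_Ico, integral_Icc_eq_integral_Ico]
  have hdev : IntegrableOn (fun a => ψ a - ψ₁) (Ico 0 1) :=
    hψ.sub (integrableOn_const (by simp))
  have hFi : IntegrableOn F (Ico 0 1) := hF.integrableOn_Icc.mono_set Ico_subset_Icc_self
  have hpoint : ∀ a ∈ Ico (0 : ℝ) 1, |F a * (ψ a - ψ₁)| ≤ B * |ψ a - ψ₁| + ε * F a := by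
    intro a ha
    have hFa := hF₀ a (Ico_subset_Icc_self ha)
    rw [abs_mul, abs_of_nonneg hFa]
    rcases le_or_gt a c with hac | hca
    · nlinarith [hFB a ⟨ha.1, hac⟩, abs_nonneg (ψ a - ψ₁)]
    · nlinarith [hψε a ⟨hca, ha.2⟩, abs_nonneg (ψ a - ψ₁)]
  calc |∫ a in Ico (0 : ℝ) 1, F a * (ψ a - ψ₁)|
      ≤ ∫ a in Ico (0 : ℝ) 1, |F a * (ψ a - ψ₁)| := abs_integral_le_integral_abs
    _ ≤ ∫ a in Ico (0 : ℝ) 1, (B * |ψ a - ψ₁| + ε * F a) :=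
      setIntegral_mono_on
        (hdev.continuousOn_mul_of_subset hF isCompact_Icc measurableSet_Ico
          Ico_subset_Icc_self).abs
        (hdev.abs.const_mul B |>.add (hFi.const_mul ε)) measurableSet_Ico hpoint
    _ = _ := by
      rw [integral_add (hdev.abs.const_mul B) (hFi.const_mul ε), integral_const_mul,
        integral_const_mul]

theorem tendsto_integral_mul_of_concentrating {ι : Type*} {l : Filter ι} {F : ι → ℝ → ℝ}
    {ψ : ℝ → ℝ} {A ψ₁ : ℝ} (hψ : IntegrableOn ψ (Ico 0 1))
    (hlim : Tendsto ψ (𝓝[<] 1) (𝓝 ψ₁)) (hF : ∀ i, ContinuousOn (F i) (Icc 0 1))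
    (hF₀ : ∀ i, ∀ a ∈ Icc (0 : ℝ) 1, 0 ≤ F i a)
    (hmass : Tendsto (fun i => ∫ a in Icc (0 : ℝ) 1, F i a) l (𝓝 A))
    (hconc : ∀ c < 1, TendstoUniformlyOn F 0 l (Icc 0 c)) :
    Tendsto (fun i => ∫ a in Icc (0 : ℝ) 1, F i a * ψ a) l (𝓝 (A * ψ₁)) := by
  set M := ∫ a in Ico (0 : ℝ) 1, |ψ a - ψ₁|
  have hM : 0 ≤ M := setIntegral_nonneg measurableSet_Ico fun _ _ => abs_nonneg _
  have herr : ∀ ε > 0, ∀ᶠ i in l,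
      |∫ a in Icc (0 : ℝ) 1, F i a * (ψ a - ψ₁)| ≤ ε * (|A| + 2) := by
    intro ε hε
    obtain ⟨c, hc, hnear⟩ := mem_nhdsLT_iff_exists_Ioo_subset.mp
      (hlim (Metric.closedBall_mem_nhds ψ₁ hε))
    filter_upwards [Metric.tendstoUniformlyOn_iff.mp (hconc c hc) (ε / (M + 1)) (by positivity),
      hmass.eventually (gt_mem_nhds (lt_of_le_of_lt (le_abs_self A) (lt_add_one |A|)))]
      with i hunif hmass_i
    have hFB : ∀ a ∈ Icc 0 c, F i a ≤ ε / (M + 1) := fun a ha => by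
      have := hunif a ha
      rw [Pi.zero_apply, dist_zero_left, Real.norm_eq_abs] at this
      exact (lt_of_abs_lt this).le
    have hψε : ∀ a ∈ Ioo c 1, |ψ a - ψ₁| ≤ ε := fun a ha => by
      simpa [Real.dist_eq] using hnear ha
    calc |∫ a in Icc (0 : ℝ) 1, F i a * (ψ a - ψ₁)|
        ≤ ε / (M + 1) * M + ε * ∫ a in Icc (0 : ℝ) 1, F i a :=
          abs_integral_mul_sub_le (hF i) (hF₀ i) hψ hε.le (by positivity) hFB hψε
      _ ≤ ε + ε * (|A| + 1) := by
          refine add_le_add ?_ (mul_le_mul_of_nonneg_left hmass_i.le hε.le)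
          rw [div_mul_eq_mul_div, div_le_iff₀ (by positivity)]
          nlinarith
      _ = ε * (|A| + 2) := by ring
  have hdev : Tendsto (fun i => ∫ a in Icc (0 : ℝ) 1, F i a * (ψ a - ψ₁)) l (𝓝 0) := by
    refine Metric.tendsto_nhds.2 fun η hη => ?_
    filter_upwards [herr (η / (2 * (|A| + 2))) (by positivity)] with i hi
    rw [Real.dist_eq, sub_zero]
    calc _ ≤ η / (2 * (|A| + 2)) * (|A| + 2) := hi
      _ = η / 2 := by field_simp
      _ < η := half_lt_self hη
  have hsplit : ∀ i, ∫ a in Icc (0 : ℝ) 1, F i a * ψ a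
      = (∫ a in Icc (0 : ℝ) 1, F i a) * ψ₁ + ∫ a in Icc (0 : ℝ) 1, F i a * (ψ a - ψ₁) := by
    intro i
    have hψ' : IntegrableOn ψ (Icc 0 1) := hψ.congr_set_ae Ico_ae_eq_Icc.symm
    have hFdev : IntegrableOn (fun a => F i a * (ψ a - ψ₁)) (Icc 0 1) :=
      (hψ'.sub (integrableOn_const (by simp))).continuousOn_mul (hF i) isCompact_Icc
    rw [← integral_mul_const, ← integral_add ((hF i).integrableOn_Icc.mul_const ψ₁) hFdev]
    congr 1; ext a; ring
  simpa only [hsplit, add_zero] using (hmass.mul_const ψ₁).add hdev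

end Concentration

noncomputable def toeplitzKernel (t₁ t₂ : ℝ) (n : ℕ) (a : ℝ) : ℝ :=
  toeplitzSum (a ^ ·) ⌊(n : ℝ) * t₁⌋₊ ⌊(n : ℝ) * t₂⌋₊ / (n * Real.log n)

theorem continuous_toeplitzKernel (t₁ t₂ : ℝ) (n : ℕ) :
    Continuous (toeplitzKernel t₁ t₂ n) :=
  (continuous_toeplitzSum_pow _ _).div_const _

theorem toeplitzKernel_nonneg (t₁ t₂ : ℝ) (n : ℕ) {a : ℝ} (ha : 0 ≤ a) :
    0 ≤ toeplitzKernel t₁ t₂ n a :=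
  div_nonneg (toeplitzSum_pow_nonneg ha _ _)
    (mul_nonneg n.cast_nonneg (Real.log_natCast_nonneg n))

theorem tendsto_integral_toeplitzKernel {t₁ t₂ : ℝ} (ht₁ : 0 < t₁) (ht₂ : 0 < t₂) :
    Tendsto (fun n => ∫ a in Set.Icc (0 : ℝ) 1, toeplitzKernel t₁ t₂ n a) atTop
      (𝓝 (2 * min t₁ t₂)) := by
  simpa only [toeplitzKernel, integral_div, integral_toeplitzSum_pow]
    using tendsto_toeplitzSum_inv_succ_div ht₁ ht₂

theorem tendstoUniformlyOn_toeplitzKernel {t₁ : ℝ} (ht₁ : 0 ≤ t₁) (t₂ : ℝ) {c : ℝ}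
    (hc : c < 1) : TendstoUniformlyOn (toeplitzKernel t₁ t₂) 0 atTop (Set.Icc 0 c) := by
  have hbound : Tendsto
      (fun n : ℕ => 2 / (1 - c) * ((⌊(n : ℝ) * t₁⌋₊ : ℝ) / n) * (Real.log n)⁻¹)
      atTop (𝓝 0) := by
    simpa only [mul_zero] using
      ((tendsto_natFloor_mul_div ht₁).const_mul (2 / (1 - c))).mul tendsto_inv_log_natCast
  refine Metric.tendstoUniformlyOn_iff.2 fun ε hε => ?_
  filter_upwards [hbound.eventually (gt_mem_nhds hε)] with n hn a ha
  rw [Pi.zero_apply, dist_zero_left, Real.norm_of_nonneg (toeplitzKernel_nonneg t₁ t₂ n ha.1)]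
  refine lt_of_le_of_lt ?_ hn
  have hnlog : 0 ≤ (n : ℝ) * Real.log n :=
    mul_nonneg n.cast_nonneg (Real.log_natCast_nonneg n)
  calc toeplitzKernel t₁ t₂ n a ≤ 2 * ⌊(n : ℝ) * t₁⌋₊ / (1 - a) / (n * Real.log n) :=
        div_le_div_of_nonneg_right (toeplitzSum_pow_le ha.1 (by linarith [ha.2]) _ _) hnlog
    _ ≤ 2 * ⌊(n : ℝ) * t₁⌋₊ / (1 - c) / (n * Real.log n) :=
        div_le_div_of_nonneg_right
          (div_le_div_of_nonneg_left (by positivity) (by linarith) (by linarith [ha.2])) hnlog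
    _ = _ := by ring

theorem integral_double_sum_psi_limit_general (ψ : ℝ → ℝ) (ψ₁ : ℝ)
    (hint : IntegrableOn ψ (Set.Ico (0 : ℝ) 1))
    (hlim : Tendsto ψ (nhdsWithin 1 (Set.Iio 1)) (nhds ψ₁))
    (lam : ℝ)
    (t₁ t₂ : ℝ) (ht₁ : 0 < t₁) (ht₂ : 0 < t₂) :
    Tendsto (fun n : ℕ =>
      (lam / (n * Real.log n)) *
        ∫ a in Set.Icc (0 : ℝ) 1,
          ∑ k ∈ Finset.Icc 1 ⌊(n : ℝ) * t₁⌋₊, ∑ ℓ ∈ Finset.Icc 1 ⌊(n : ℝ) * t₂⌋₊,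
            a ^ (((k : ℤ) - ℓ).natAbs) * ψ a)
      atTop (nhds (2 * lam * ψ₁ * min t₁ t₂)) := by
  have hlimit := tendsto_integral_mul_of_concentrating hint hlim
    (fun n => (continuous_toeplitzKernel t₁ t₂ n).continuousOn)
    (fun n a ha => toeplitzKernel_nonneg t₁ t₂ n ha.1)
    (tendsto_integral_toeplitzKernel ht₁ ht₂)
    (fun c hc => tendstoUniformlyOn_toeplitzKernel ht₁.le t₂ hc)
  convert hlimit.const_mul lam using 2 with n
  · rw [← integral_const_mul, ← integral_const_mul]
    congr 1; ext a
    simp only [toeplitzKernel, toeplitzSum, div_mul_eq_mul_div, sum_mul]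
    ring
  · ring

theorem integral_double_sum_psi_limit (ψ : ℝ → ℝ) (ψ₁ : ℝ) (hψ₁ : 0 < ψ₁)
    (hnonneg : ∀ x ∈ Set.Ico (0 : ℝ) 1, 0 ≤ ψ x)
    (hint : IntegrableOn ψ (Set.Ico (0 : ℝ) 1))
    (hlim : Tendsto ψ (nhdsWithin 1 (Set.Iio 1)) (nhds ψ₁))
    (lam : ℝ) (hlam : 0 < lam)
    (t₁ t₂ : ℝ) (ht₁ : 0 < t₁) (ht₂ : 0 < t₂) :
    Tendsto (fun n : ℕ =>
      (lam / (n * Real.log n)) *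
        ∫ a in Set.Icc (0 : ℝ) 1,
          ∑ k ∈ Finset.Icc 1 ⌊(n : ℝ) * t₁⌋₊, ∑ ℓ ∈ Finset.Icc 1 ⌊(n : ℝ) * t₂⌋₊,
            a ^ (((k : ℤ) - ℓ).natAbs) * ψ a)
      atTop (nhds (2 * lam * ψ₁ * min t₁ t₂)) :=
  integral_double_sum_psi_limit_general ψ ψ₁ hint hlim lam t₁ t₂ ht₁ ht₂
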